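/- ∑_{n=1}^∞ 1/(2^n − 1) = ∑_{k=1}^∞ 2^{-k^2} + 2·∑_{j=1}^∞ ∑_{k=1}^∞ 2^{-(k^2 + jk)}. -/

import Mathlib

/-!
Expanding `1 / (2 ^ a - 1) = ∑_{b ≥ 1} 2^{-ab}` writes the left-hand side as the sum of the
symmetric double series `2^{-ab}` over `a, b ≥ 1`. Splitting the pairs into the diagonal `a = b`
and the two mirror-image triangles `b = a + j`, `a = b + j` (`j ≥ 1`), and noting
`a (a + j) = a² + j a`, gives the right-hand side.
-/

open Function

lemma range_upper_union_range_lower_eq_compl_range_diag :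
    (Set.range fun p : ℕ × ℕ ↦ (p.2, p.2 + p.1 + 1)) ∪
        Set.range (fun p : ℕ × ℕ ↦ (p.2 + p.1 + 1, p.2)) =
      (Set.range fun k : ℕ ↦ (k, k))ᶜ := by
  ext ⟨a, b⟩
  simp only [Set.mem_union, Set.mem_range, Set.mem_compl_iff, Prod.ext_iff, Prod.exists]
  constructor
  · rintro (⟨j, k, rfl, rfl⟩ | ⟨j, k, rfl, rfl⟩) <;> rintro ⟨c, h₁, h₂⟩ <;> omega
  · intro hne
    rcases lt_trichotomy a b with hab | rfl | hab
    · exact .inl ⟨b - a - 1, a, rfl, by omega⟩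
    · exact absurd ⟨a, rfl, rfl⟩ hne
    · exact .inr ⟨a - b - 1, b, by omega, rfl⟩

section NatProd

variable {α : Type*} [AddCommGroup α] [UniformSpace α] [IsUniformAddGroup α] [CompleteSpace α]
  [T2Space α]

lemma Summable.tsum_eq_tsum_diag_add_tsum_upper_add_tsum_lower {f : ℕ × ℕ → α}
    (hf : Summable f) :
    ∑' p, f p = ∑' k, f (k, k) + ∑' p : ℕ × ℕ, f (p.2, p.2 + p.1 + 1) +
      ∑' p : ℕ × ℕ, f (p.2 + p.1 + 1, p.2) := by
  have hdiag : Injective fun k : ℕ ↦ (k, k) := fun a b h ↦ (Prod.ext_iff.1 h).1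
  have hupper : Injective fun p : ℕ × ℕ ↦ (p.2, p.2 + p.1 + 1) := by
    rintro ⟨a, b⟩ ⟨c, d⟩ h
    simp only [Prod.ext_iff] at h ⊢
    omega
  have hlower : Injective fun p : ℕ × ℕ ↦ (p.2 + p.1 + 1, p.2) := by
    rintro ⟨a, b⟩ ⟨c, d⟩ h
    simp only [Prod.ext_iff] at h ⊢
    omega
  have hdisj : Disjoint (Set.range fun p : ℕ × ℕ ↦ (p.2, p.2 + p.1 + 1))
      (Set.range fun p : ℕ × ℕ ↦ (p.2 + p.1 + 1, p.2)) := by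
    rw [Set.disjoint_left]
    rintro _ ⟨⟨a, b⟩, rfl⟩ ⟨⟨c, d⟩, h⟩
    simp only [Prod.ext_iff] at h
    omega
  rw [← (hf.subtype _).tsum_add_tsum_compl (hf.subtype _),
    ← range_upper_union_range_lower_eq_compl_range_diag,
    (hf.subtype _).tsum_union_disjoint hdisj (hf.subtype _), tsum_range f hdiag,
    tsum_range f hupper, tsum_range f hlower, add_assoc]

lemma Summable.tsum_eq_tsum_diag_add_two_nsmul_tsum_upper {f : ℕ × ℕ → α}
    (hf : Summable f) (hsymm : ∀ a b, f (a, b) = f (b, a)) :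
    ∑' p, f p = ∑' k, f (k, k) + 2 • ∑' j, ∑' k, f (k, k + j + 1) := by
  have hupper : Summable fun p : ℕ × ℕ ↦ f (p.2, p.2 + p.1 + 1) :=
    hf.comp_injective fun p q h ↦ by simp only [Prod.ext_iff] at h ⊢; omega
  have hlower : ∑' p : ℕ × ℕ, f (p.2 + p.1 + 1, p.2) = ∑' p : ℕ × ℕ, f (p.2, p.2 + p.1 + 1) :=
    tsum_congr fun p ↦ hsymm _ _
  rw [hf.tsum_eq_tsum_diag_add_tsum_upper_add_tsum_lower, hlower, add_assoc, ← two_nsmul,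
    hupper.tsum_prod]

end NatProd

section Lambert

variable {𝕜 : Type*} [NormedField 𝕜] {x : 𝕜}

lemma summable_pow_succ_mul_succ [CompleteSpace 𝕜] (hx : ‖x‖ < 1) :
    Summable fun p : ℕ × ℕ ↦ x ^ ((p.1 + 1) * (p.2 + 1)) := by
  have hgeom : Summable fun n : ℕ ↦ ‖x‖ ^ n := summable_geometric_of_lt_one (norm_nonneg x) hx
  refine Summable.of_norm_bounded (hgeom.mul_of_nonneg hgeom (fun _ ↦ by positivity)
    fun _ ↦ by positivity) fun p ↦ ?_
  rw [norm_pow, ← pow_add]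
  exact pow_le_pow_of_le_one (norm_nonneg x) hx.le (by nlinarith)

lemma hasSum_pow_succ_mul_succ (hx : ‖x‖ < 1) (n : ℕ) :
    HasSum (fun m : ℕ ↦ x ^ ((n + 1) * (m + 1))) (x ^ (n + 1) / (1 - x ^ (n + 1))) := by
  have hq : ‖x ^ (n + 1)‖ < 1 := by
    rw [norm_pow]
    exact pow_lt_one₀ (norm_nonneg x) hx n.succ_ne_zero
  have hterm (m : ℕ) : x ^ ((n + 1) * (m + 1)) = x ^ (n + 1) * (x ^ (n + 1)) ^ m := by
    rw [pow_mul, pow_succ']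
  simpa only [hterm, div_eq_mul_inv] using
    (hasSum_geometric_of_norm_lt_one hq).mul_left (x ^ (n + 1))

theorem tsum_pow_div_one_sub_pow [CompleteSpace 𝕜] (hx : ‖x‖ < 1) :
    ∑' n : ℕ, x ^ (n + 1) / (1 - x ^ (n + 1)) =
      ∑' k : ℕ, x ^ ((k + 1) ^ 2) + 2 * ∑' j : ℕ, ∑' k : ℕ, x ^ ((k + 1) ^ 2 + (j + 1) * (k + 1)) := by
  have hf := summable_pow_succ_mul_succ hx
  rw [(hf.hasSum.prod_fiberwise (hasSum_pow_succ_mul_succ hx)).tsum_eq,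
    hf.tsum_eq_tsum_diag_add_two_nsmul_tsum_upper fun a b ↦ by rw [mul_comm], two_nsmul, two_mul]
  have hdiag (k : ℕ) : (k + 1) * (k + 1) = (k + 1) ^ 2 := (sq _).symm
  have hupper (j k : ℕ) : (k + 1) * (k + j + 1 + 1) = (k + 1) ^ 2 + (j + 1) * (k + 1) := by ring
  simp only [hdiag, hupper]

end Lambert

theorem erdos_borwein_theta_representation :
    ∑' n : ℕ, (1 : ℝ) / (2 ^ (n + 1) - 1) =
      (∑' k : ℕ, (1 : ℝ) / 2 ^ ((k + 1) ^ 2)) +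
      2 * ∑' j : ℕ, ∑' k : ℕ, (1 : ℝ) / 2 ^ ((k + 1) ^ 2 + (j + 1) * (k + 1)) := by
  have h := tsum_pow_div_one_sub_pow (x := (1 / 2 : ℝ)) (by norm_num)
  simp only [one_div_pow] at h
  have hterm (n : ℕ) : (1 : ℝ) / (2 ^ (n + 1) - 1) = 1 / 2 ^ (n + 1) / (1 - 1 / 2 ^ (n + 1)) := by
    have : (1 : ℝ) < 2 ^ (n + 1) := one_lt_pow₀ one_lt_two n.succ_ne_zero
    field_simp
  rwa [tsum_congr hterm]
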